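/- arXiv:2502.14813 — 7 statements merged into one kernel-verified Lean document; each statement's English description precedes it below -/
import Mathlib

section
/- The relation of being δ-closed is transitive: if A is δ-closed in B and B is δ-closed in C, then A is δ-closed in C. -/
/-- `g` is a gate for `b` in `A`: `g ∈ A` and every `a ∈ A` satisfies
`d(b,a) = d(b,g) + d(g,a)`. -/
def IsGate {X : Type*} [MetricSpace X] (A : Set X) (b g : X) : Prop :=
  g ∈ A ∧ ∀ a ∈ A, dist b a = dist b g + dist g a

/-- `A` is gated in `X`: every point outside `A` has a gate in `A`. -/
def Gated {X : Type*} [MetricSpace X] (A : Set X) : Prop :=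
  ∀ b ∉ A, ∃ g, IsGate A b g

/-- `g` assigns to each point outside `A` a gate in `A`. -/
def GateMap {X : Type*} [MetricSpace X] (A : Set X) (g : X → X) : Prop :=
  ∀ b ∉ A, IsGate A b (g b)

/-- `A` is δ-closed in `X`, witnessed by the gate map `g`. -/
def DeltaClosedWith {X : Type*} [MetricSpace X] (δ : ℝ) (A : Set X) (g : X → X) : Prop :=
  GateMap A g ∧
  ∀ b ∉ A, ∀ b' ∉ A, δ < dist (g b) (g b') →
    dist b b' = dist b (g b) + dist (g b) (g b') + dist (g b') b'

/-- `A` is δ-closed in the ambient metric space `X`. -/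
def DeltaClosed {X : Type*} [MetricSpace X] (δ : ℝ) (A : Set X) : Prop :=
  ∃ g : X → X, DeltaClosedWith δ A g

/-- `A` is δ-closed in the subset `B` of the ambient metric space `X`. -/
def DeltaClosedIn {X : Type*} [MetricSpace X] (δ : ℝ) (A B : Set X) : Prop :=
  A ⊆ B ∧ ∃ g : X → X,
    (∀ b ∈ B, b ∉ A → IsGate A b (g b)) ∧
    (∀ b ∈ B, ∀ b' ∈ B, b ∉ A → b' ∉ A → δ < dist (g b) (g b') →
      dist b b' = dist b (g b) + dist (g b) (g b') + dist (g b') b')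

/-- Being δ-closed is transitive: if `A ≤_δ B` and `B ≤_δ C` then `A ≤_δ C`. -/
theorem deltaClosed_trans {X : Type*} [MetricSpace X] (δ : ℝ) (hδ : 0 ≤ δ)
    (A B C : Set X) (hAB : DeltaClosedIn δ A B) (hBC : DeltaClosedIn δ B C) :
    DeltaClosedIn δ A C := by
  classical
  obtain ⟨hABsub, gA, hgA, hA2⟩ := hAB
  obtain ⟨hBCsub, gB, hgB, hB2⟩ := hBC
  -- h : gate map of A on all of B (identity on A)
  set h : X → X := fun b => if b ∈ A then b else gA b with hh
  -- L1 : gate property of h on B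
  have L1 : ∀ b ∈ B, h b ∈ A ∧ ∀ a ∈ A, dist b a = dist b (h b) + dist (h b) a := by
    intro b hb
    by_cases hbA : b ∈ A
    · refine ⟨by simp [hh, hbA], ?_⟩
      intro a ha; simp [hh, hbA]
    · have := hgA b hb hbA
      refine ⟨by simpa [hh, hbA] using this.1, ?_⟩
      intro a ha; simpa [hh, hbA] using this.2 a ha
  -- L2 : h is nonexpansive on B
  have L2 : ∀ b ∈ B, ∀ b' ∈ B, dist (h b) (h b') ≤ dist b b' := by
    intro b hb b' hb'
    have e1 : dist b (h b') = dist b (h b) + dist (h b) (h b') :=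
      (L1 b hb).2 (h b') (L1 b' hb').1
    have e2 : dist b' (h b) = dist b' (h b') + dist (h b') (h b) :=
      (L1 b' hb').2 (h b) (L1 b hb).1
    have t1 : dist b (h b') ≤ dist b b' + dist b' (h b') := dist_triangle _ _ _
    have t2 : dist b' (h b) ≤ dist b' b + dist b (h b) := dist_triangle _ _ _
    have c1 : dist (h b) (h b') = dist (h b') (h b) := dist_comm _ _
    have c2 : dist b b' = dist b' b := dist_comm _ _
    linarith
  -- L3 : the δ-condition for h on B
  have L3 : ∀ b ∈ B, ∀ b' ∈ B, δ < dist (h b) (h b') →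
      dist b b' = dist b (h b) + dist (h b) (h b') + dist (h b') b' := by
    intro b hb b' hb' hd
    by_cases hbA : b ∈ A
    · by_cases hbA' : b' ∈ A
      · simp [hh, hbA, hbA']
      · have e := (hgA b' hb' hbA').2 b hbA
        have c1 : dist b' b = dist b b' := dist_comm _ _
        have c2 : dist (gA b') b = dist b (gA b') := dist_comm _ _
        simp only [hh, hbA, hbA', if_true, if_false, if_neg hbA']
        simp only [hh, hbA, if_pos hbA] at hd ⊢
        rw [dist_self]
        have c3 : dist (gA b') b' = dist b' (gA b') := dist_comm _ _
        linarith
    · by_cases hbA' : b' ∈ A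
      · have e := (hgA b hb hbA).2 b' hbA'
        simp only [hh, if_neg hbA, if_pos hbA'] at hd ⊢
        rw [dist_self]
        have c3 : dist (gA b) b' = dist b' (gA b) := dist_comm _ _
        linarith
      · have := hA2 b hb b' hb' hbA hbA'
        simp only [hh, if_neg hbA, if_neg hbA'] at hd ⊢
        exact this (by linarith)
  -- the composed gate map
  set g : X → X := fun c => if c ∈ B then h c else h (gB c) with hg
  refine ⟨hABsub.trans hBCsub, g, ?_, ?_⟩
  · -- gate property
    intro c hc hcA
    by_cases hcB : c ∈ B
    · have h1 := L1 c hcB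
      simp only [hg, if_pos hcB]
      exact ⟨h1.1, h1.2⟩
    · have hb := hgB c hc hcB
      have hbB : gB c ∈ B := hb.1
      have h1 := L1 (gB c) hbB
      simp only [hg, if_neg hcB]
      refine ⟨h1.1, ?_⟩
      intro a ha
      have e1 : dist c a = dist c (gB c) + dist (gB c) a := hb.2 a (hABsub ha)
      have e2 : dist (gB c) a = dist (gB c) (h (gB c)) + dist (h (gB c)) a := h1.2 a ha
      have e3 : dist c (h (gB c)) = dist c (gB c) + dist (gB c) (h (gB c)) :=
        hb.2 (h (gB c)) (hABsub h1.1)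
      linarith
  · -- δ-condition
    intro c hc c' hc' hcA hcA' hd
    -- bridge lemma
    have bridge : ∀ x ∈ C, x ∉ B → dist x (h (gB x)) = dist x (gB x) + dist (gB x) (h (gB x)) := by
      intro x hx hxB
      have hb := hgB x hx hxB
      exact hb.2 (h (gB x)) (hABsub (L1 (gB x) hb.1).1)
    by_cases hcB : c ∈ B
    · by_cases hcB' : c' ∈ B
      · simp only [hg, if_pos hcB, if_pos hcB'] at hd ⊢
        exact L3 c hcB c' hcB' hd
      · -- c ∈ B, c' ∉ B
        have hb' := hgB c' hc' hcB'
        simp only [hg, if_pos hcB, if_neg hcB'] at hd ⊢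
        have e1 : dist c' c = dist c' (gB c') + dist (gB c') c := hb'.2 c hcB
        have e2 : dist c (gB c') = dist c (h c) + dist (h c) (h (gB c')) + dist (h (gB c')) (gB c') :=
          L3 c hcB (gB c') hb'.1 hd
        have e3 := bridge c' hc' hcB'
        have c1 : dist c c' = dist c' c := dist_comm _ _
        have c2 : dist (gB c') c = dist c (gB c') := dist_comm _ _
        have c3 : dist (h (gB c')) (gB c') = dist (gB c') (h (gB c')) := dist_comm _ _
        have c4 : dist (h (gB c')) c' = dist c' (h (gB c')) := dist_comm _ _
        linarith
    · by_cases hcB' : c' ∈ B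
      · -- c ∉ B, c' ∈ B
        have hb := hgB c hc hcB
        simp only [hg, if_neg hcB, if_pos hcB'] at hd ⊢
        have e1 : dist c c' = dist c (gB c) + dist (gB c) c' := hb.2 c' hcB'
        have e2 : dist (gB c) c' = dist (gB c) (h (gB c)) + dist (h (gB c)) (h c') + dist (h c') c' :=
          L3 (gB c) hb.1 c' hcB' hd
        have e3 := bridge c hc hcB
        linarith
      · -- both outside B
        have hb := hgB c hc hcB
        have hb' := hgB c' hc' hcB'
        simp only [hg, if_neg hcB, if_neg hcB'] at hd ⊢
        have hle : dist (h (gB c)) (h (gB c')) ≤ dist (gB c) (gB c') := L2 _ hb.1 _ hb'.1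
        have e0 : dist c c' = dist c (gB c) + dist (gB c) (gB c') + dist (gB c') c' :=
          hB2 c hc c' hc' hcB hcB' (by linarith)
        have e1 : dist (gB c) (gB c') =
            dist (gB c) (h (gB c)) + dist (h (gB c)) (h (gB c')) + dist (h (gB c')) (gB c') :=
          L3 (gB c) hb.1 (gB c') hb'.1 hd
        have e2 := bridge c hc hcB
        have e3 := bridge c' hc' hcB'
        have c3 : dist (h (gB c')) (gB c') = dist (gB c') (h (gB c')) := dist_comm _ _
        have c4 : dist (h (gB c')) c' = dist c' (h (gB c')) := dist_comm _ _
        have c5 : dist (gB c') c' = dist c' (gB c') := dist_comm _ _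
        linarith
end

section
/- If A and B are δ-closed subsets of a metric space X with A ∩ B ≠ ∅, then A ∩ B is δ-closed in B. -/
/-- If `A`, `B` are δ-closed subsets of `X` with `A ∩ B ≠ ∅`, then `A ∩ B` is
δ-closed in `B`. -/
theorem inter_deltaClosedIn {X : Type*} [MetricSpace X] (δ : ℝ) (hδ : 0 ≤ δ)
    (A B : Set X) (hA : DeltaClosed δ A) (hB : DeltaClosed δ B)
    (hAB : (A ∩ B).Nonempty) : DeltaClosedIn δ (A ∩ B) B := by
  obtain ⟨gA, hgA, hδA⟩ := hA
  obtain ⟨gB, hgB, hδB⟩ := hB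
  obtain ⟨c, hcA, hcB⟩ := hAB
  have key : ∀ b ∈ B, b ∉ A → gA b ∈ B := by
    intro b hbB hbA
    by_contra hgb
    obtain ⟨hgAmem, hgate⟩ := hgA b hbA
    obtain ⟨hhB, hgateB⟩ := hgB (gA b) hgb
    have h1 : dist b c = dist b (gA b) + dist (gA b) c := hgate c hcA
    have h2 : dist (gA b) b = dist (gA b) (gB (gA b)) + dist (gB (gA b)) b := hgateB b hbB
    have h3 : dist (gA b) c = dist (gA b) (gB (gA b)) + dist (gB (gA b)) c := hgateB c hcB
    have h4 : dist b c ≤ dist b (gB (gA b)) + dist (gB (gA b)) c := dist_triangle _ _ _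
    have c1 := dist_comm b (gA b)
    have c2 := dist_comm b (gB (gA b))
    have h5 : dist (gA b) (gB (gA b)) = 0 := by
      have hn := dist_nonneg (x := gA b) (y := gB (gA b))
      linarith
    have : gA b = gB (gA b) := by rwa [dist_eq_zero] at h5
    exact hgb (this ▸ hhB)
  refine ⟨Set.inter_subset_right, gA, ?_, ?_⟩
  · intro b hbB hbAB
    have hbA : b ∉ A := fun h => hbAB ⟨h, hbB⟩
    obtain ⟨hg, hgate⟩ := hgA b hbA
    exact ⟨⟨hg, key b hbB hbA⟩, fun a ha => hgate a ha.1⟩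
  · intro b hbB b' hb'B hbAB hb'AB hd
    exact hδA b (fun h => hbAB ⟨h, hbB⟩) b' (fun h => hb'AB ⟨h, hb'B⟩) hd
end

section
/- Let A and B be δ-closed subsets of a metric space X with A ∩ B ≠ ∅, and suppose the δ-ball around A ∩ B intersected with A ∪ B equals A ∩ B. Then A ∪ B is δ-closed in X. -/
/-- Key lemma: if `A`, `B` are gated with nonempty intersection and `u ∈ B \ A`,
then the gate of `u` in `A` lies in `B` (hence in `A ∩ B`). -/
lemma gate_mem_inter {X : Type*} [MetricSpace X] {A B : Set X} {gA gB : X → X}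
    (hgA : GateMap A gA) (hgB : GateMap B gB) (hne : (A ∩ B).Nonempty)
    {u : X} (huB : u ∈ B) (huA : u ∉ A) : gA u ∈ B := by
  by_contra hvB
  obtain ⟨hvA, hv⟩ := hgA u huA
  obtain ⟨hwB, hw⟩ := hgB (gA u) hvB
  set v := gA u with hv_def
  set w := gB v with hw_def
  have h1 : dist v u = dist v w + dist w u := hw u huB
  -- f u ≥ d(u,v) + f v
  have hfu : dist u v + Metric.infDist v (A ∩ B) ≤ Metric.infDist u (A ∩ B) := by
    by_contra hlt
    push_neg at hlt
    obtain ⟨p, hp, hdp⟩ := (Metric.infDist_lt_iff hne).mp hlt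
    have h2 : dist u p = dist u v + dist v p := hv p hp.1
    have h3 : Metric.infDist v (A ∩ B) ≤ dist v p := Metric.infDist_le_dist_of_mem hp
    linarith
  -- f v ≥ d(v,w) + f w
  have hfv : dist v w + Metric.infDist w (A ∩ B) ≤ Metric.infDist v (A ∩ B) := by
    by_contra hlt
    push_neg at hlt
    obtain ⟨p, hp, hdp⟩ := (Metric.infDist_lt_iff hne).mp hlt
    have h2 : dist v p = dist v w + dist w p := hw p hp.2
    have h3 : Metric.infDist w (A ∩ B) ≤ dist w p := Metric.infDist_le_dist_of_mem hp
    linarith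
  -- f u ≤ f w + d(u,w)
  have hup : Metric.infDist u (A ∩ B) ≤ Metric.infDist w (A ∩ B) + dist u w :=
    Metric.infDist_le_infDist_add_dist
  have hc1 : dist u v = dist v u := dist_comm u v
  have hc2 : dist u w = dist w u := dist_comm u w
  have hvw : dist v w ≤ 0 := by linarith
  have : v = w := dist_le_zero.mp hvw
  exact hvB (this ▸ hwB)

/-- If `A`, `B` are δ-closed in `X`, `A ∩ B ≠ ∅`, and the δ-ball around `A ∩ B`
meets `A ∪ B` exactly in `A ∩ B`, then `A ∪ B` is δ-closed in `X`. -/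
theorem union_deltaClosed {X : Type*} [MetricSpace X] (δ : ℝ) (hδ : 0 ≤ δ)
    (A B : Set X) (hA : DeltaClosed δ A) (hB : DeltaClosed δ B)
    (hne : (A ∩ B).Nonempty)
    (hball : {x : X | Metric.infDist x (A ∩ B) ≤ δ} ∩ (A ∪ B) = A ∩ B) :
    DeltaClosed δ (A ∪ B) := by
  classical
  obtain ⟨gA, hgA, hdA⟩ := hA
  obtain ⟨gB, hgB, hdB⟩ := hB
  -- points of A ∪ B within δ of A ∩ B lie in A ∩ B
  have hball' : ∀ u, u ∈ A ∪ B → Metric.infDist u (A ∩ B) ≤ δ → u ∈ A ∩ B := by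
    intro u hu hle
    have : u ∈ {x : X | Metric.infDist x (A ∩ B) ≤ δ} ∩ (A ∪ B) := ⟨hle, hu⟩
    rwa [hball] at this
  -- Key: if x ∉ A ∪ B and gB x ∉ A, then gA x ∈ B
  have key : ∀ x ∉ A ∪ B, gB x ∉ A → gA x ∈ B := by
    intro x hx hbA
    by_contra haB
    have hxA : x ∉ A := fun h => hx (Or.inl h)
    have hxB : x ∉ B := fun h => hx (Or.inr h)
    obtain ⟨haA, hax⟩ := hgA x hxA
    obtain ⟨hbB, hbx⟩ := hgB x hxB
    set a := gA x
    set b := gB x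
    -- gates of b in A and of a in B land in A ∩ B
    have ha1 : gA b ∈ A ∩ B := ⟨(hgA b hbA).1, gate_mem_inter hgA hgB hne hbB hbA⟩
    have hb1 : gB a ∈ A ∩ B := by
      have := gate_mem_inter hgB hgA (Set.inter_comm A B ▸ hne) haA haB
      exact ⟨this, (hgB a haB).1⟩
    -- δ < dist a (gA b)
    have hda : δ < dist a (gA b) := by
      by_contra hle
      push_neg at hle
      have : Metric.infDist a (A ∩ B) ≤ δ :=
        le_trans (Metric.infDist_le_dist_of_mem ha1) hle
      exact haB (hball' a (Or.inl haA) this).2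
    have hdb : δ < dist b (gB a) := by
      by_contra hle
      push_neg at hle
      have : Metric.infDist b (A ∩ B) ≤ δ :=
        le_trans (Metric.infDist_le_dist_of_mem hb1) hle
      exact hbA (hball' b (Or.inr hbB) this).1
    have e1 : dist x b = dist x a + dist a (gA b) + dist (gA b) b := hdA x hxA b hbA hda
    have g1 : dist b a = dist b (gA b) + dist (gA b) a := (hgA b hbA).2 a haA
    have e2 : dist x a = dist x b + dist b (gB a) + dist (gB a) a := hdB x hxB a haB hdb
    have g2 : dist a b = dist a (gB a) + dist (gB a) b := (hgB a haB).2 b hbB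
    have c1 : dist a (gA b) = dist (gA b) a := dist_comm _ _
    have c2 : dist b (gA b) = dist (gA b) b := dist_comm _ _
    have c3 : dist a b = dist b a := dist_comm a b
    have c4 : dist a (gB a) = dist (gB a) a := dist_comm _ _
    have c5 : dist b (gB a) = dist (gB a) b := dist_comm _ _
    -- e1 and g1 give dist x b = dist x a + dist a b; e2, g2 give the reverse
    have hab : dist a b = 0 := by linarith
    have : a = b := dist_eq_zero.mp hab
    exact haB (this ▸ hbB)
  -- the candidate gate map
  refine ⟨fun x => if gB x ∈ A then gA x else gB x, ?_, ?_⟩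
  · -- gate map property
    intro x hx
    have hxA : x ∉ A := fun h => hx (Or.inl h)
    have hxB : x ∉ B := fun h => hx (Or.inr h)
    obtain ⟨haA, hax⟩ := hgA x hxA
    obtain ⟨hbB, hbx⟩ := hgB x hxB
    by_cases hcase : gB x ∈ A
    · simp only [if_pos hcase]
      refine ⟨Or.inl haA, ?_⟩
      intro y hy
      rcases hy with hyA | hyB
      · exact hax y hyA
      · have h1 : dist x y = dist x (gB x) + dist (gB x) y := hbx y hyB
        have h2 : dist x (gB x) = dist x (gA x) + dist (gA x) (gB x) := hax (gB x) hcase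
        have t1 : dist (gA x) y ≤ dist (gA x) (gB x) + dist (gB x) y := dist_triangle _ _ _
        have t2 : dist x y ≤ dist x (gA x) + dist (gA x) y := dist_triangle _ _ _
        linarith
    · simp only [if_neg hcase]
      have haB : gA x ∈ B := key x hx hcase
      refine ⟨Or.inr hbB, ?_⟩
      intro y hy
      rcases hy with hyA | hyB
      · have h1 : dist x y = dist x (gA x) + dist (gA x) y := hax y hyA
        have h2 : dist x (gA x) = dist x (gB x) + dist (gB x) (gA x) := hbx (gA x) haB
        have t1 : dist (gB x) y ≤ dist (gB x) (gA x) + dist (gA x) y := dist_triangle _ _ _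
        have t2 : dist x y ≤ dist x (gB x) + dist (gB x) y := dist_triangle _ _ _
        linarith
      · exact hbx y hyB
  · -- the δ-condition
    intro x hx y hy hδxy
    have hxA : x ∉ A := fun h => hx (Or.inl h)
    have hxB : x ∉ B := fun h => hx (Or.inr h)
    have hyA : y ∉ A := fun h => hy (Or.inl h)
    have hyB : y ∉ B := fun h => hy (Or.inr h)
    by_cases hcx : gB x ∈ A <;> by_cases hcy : gB y ∈ A
    · -- both A-gates
      simp only [if_pos hcx, if_pos hcy] at hδxy ⊢
      exact hdA x hxA y hyA hδxy
    · -- x uses gA x, y uses gB y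
      simp only [if_pos hcx, if_neg hcy] at hδxy ⊢
      have hayB : gA y ∈ B := key y hy hcy
      by_cases hsub : δ < dist (gA x) (gA y)
      · have e1 : dist x y = dist x (gA x) + dist (gA x) (gA y) + dist (gA y) y :=
          hdA x hxA y hyA hsub
        have g1 : dist y (gA y) = dist y (gB y) + dist (gB y) (gA y) :=
          (hgB y hyB).2 (gA y) hayB
        have t1 : dist x y ≤ dist x (gA x) + dist (gA x) (gB y) + dist (gB y) y := by
          have u1 : dist x y ≤ dist x (gB y) + dist (gB y) y := dist_triangle _ _ _
          have u2 : dist x (gB y) ≤ dist x (gA x) + dist (gA x) (gB y) := dist_triangle _ _ _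
          linarith
        have t2 : dist (gA x) (gB y) ≤ dist (gA x) (gA y) + dist (gA y) (gB y) :=
          dist_triangle _ _ _
        have c1 : dist (gA y) y = dist y (gA y) := dist_comm _ _
        have c2 : dist (gB y) y = dist y (gB y) := dist_comm _ _
        have c3 : dist (gA y) (gB y) = dist (gB y) (gA y) := dist_comm _ _
        linarith
      · push_neg at hsub
        -- then gA x ∈ A ∩ B, hence gA x = gB x
        have haxAB : gA x ∈ A ∩ B := by
          apply hball' (gA x) (Or.inl (hgA x hxA).1)
          calc Metric.infDist (gA x) (A ∩ B) ≤ dist (gA x) (gA y) :=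
                Metric.infDist_le_dist_of_mem ⟨(hgA y hyA).1, hayB⟩
            _ ≤ δ := hsub
        have heq : gB x = gA x := by
          have h1 : dist x (gA x) = dist x (gB x) + dist (gB x) (gA x) :=
            (hgB x hxB).2 (gA x) haxAB.2
          have h2 : dist x (gB x) = dist x (gA x) + dist (gA x) (gB x) :=
            (hgA x hxA).2 (gB x) hcx
          have c : dist (gA x) (gB x) = dist (gB x) (gA x) := dist_comm _ _
          have : dist (gB x) (gA x) = 0 := by linarith
          exact dist_eq_zero.mp this
        have hδ' : δ < dist (gB x) (gB y) := by rwa [heq]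
        have := hdB x hxB y hyB hδ'
        rwa [heq] at this
    · -- x uses gB x, y uses gA y (symmetric)
      simp only [if_neg hcx, if_pos hcy] at hδxy ⊢
      have haxB : gA x ∈ B := key x hx hcx
      by_cases hsub : δ < dist (gA x) (gA y)
      · have e1 : dist x y = dist x (gA x) + dist (gA x) (gA y) + dist (gA y) y :=
          hdA x hxA y hyA hsub
        have g1 : dist x (gA x) = dist x (gB x) + dist (gB x) (gA x) :=
          (hgB x hxB).2 (gA x) haxB
        have t1 : dist x y ≤ dist x (gB x) + dist (gB x) (gA y) + dist (gA y) y := by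
          have u1 : dist x y ≤ dist x (gB x) + dist (gB x) y := dist_triangle _ _ _
          have u2 : dist (gB x) y ≤ dist (gB x) (gA y) + dist (gA y) y := dist_triangle _ _ _
          linarith
        have t2 : dist (gB x) (gA y) ≤ dist (gB x) (gA x) + dist (gA x) (gA y) :=
          dist_triangle _ _ _
        linarith
      · push_neg at hsub
        have hayAB : gA y ∈ A ∩ B := by
          apply hball' (gA y) (Or.inl (hgA y hyA).1)
          calc Metric.infDist (gA y) (A ∩ B) ≤ dist (gA y) (gA x) :=
                Metric.infDist_le_dist_of_mem ⟨(hgA x hxA).1, haxB⟩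
            _ = dist (gA x) (gA y) := dist_comm _ _
            _ ≤ δ := hsub
        have heq : gB y = gA y := by
          have h1 : dist y (gA y) = dist y (gB y) + dist (gB y) (gA y) :=
            (hgB y hyB).2 (gA y) hayAB.2
          have h2 : dist y (gB y) = dist y (gA y) + dist (gA y) (gB y) :=
            (hgA y hyA).2 (gB y) hcy
          have c : dist (gA y) (gB y) = dist (gB y) (gA y) := dist_comm _ _
          have : dist (gB y) (gA y) = 0 := by linarith
          exact dist_eq_zero.mp this
        have hδ' : δ < dist (gB x) (gB y) := by rwa [heq]
        have := hdB x hxB y hyB hδ'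
        rwa [heq] at this
    · -- both B-gates
      simp only [if_neg hcx, if_neg hcy] at hδxy ⊢
      exact hdB x hxB y hyB hδxy
end

section
/- For δ > 0, the class of finite δ-hyperbolic metric spaces does not have the amalgamation property. Specifically, with A = {c,d,e} and the two δ-hyperbolic extensions B₁ = A ∪ {a}, B₂ = A ∪ {b} whose distances are d(c,d) = x₀+x₁, d(e,c) = z+x₀, d(e,d) = z+x₁, d(a,e) = z₀, d(a,d) = z₀+z+x₁, d(a,c) = z₀+z+x₀−2δ, d(b,e) = z₁, d(b,d) = z₁+z+x₁−2δ, d(b,c) = z₁+z+x₀, where z > 2δ and z₀ ≠ z₁ (and all parameters positive with the given expressions defining genuine metrics), there is no real number r such that setting d(a,b) = r makes {a,b,c,d,e} a δ-hyperbolic metric space. -/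
/-- A metric space is δ-hyperbolic if for any four points, among the three pairwise
sums of distances, the largest exceeds the middle one by at most 2δ. -/
def IsDeltaHyperbolic (δ : ℝ) (X : Type*) [MetricSpace X] : Prop :=
  ∀ x₁ x₂ x₃ x₄ : X,
    dist x₁ x₄ + dist x₂ x₃ ≤
      max (dist x₁ x₂ + dist x₃ x₄) (dist x₁ x₃ + dist x₂ x₄) + 2 * δ

/-- For δ > 0 the class of finite δ-hyperbolic spaces fails amalgamation: with the
distances below (where `z > 2δ`, `z₀ ≠ z₁`, all parameters positive), there is no
value `r = d(a,b)` making the five-point space δ-hyperbolic. -/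
theorem no_amalgamation (δ x₀ x₁ z₀ z₁ z : ℝ) (hδ : 0 < δ)
    (hx₀ : 0 < x₀) (hx₁ : 0 < x₁) (hz₀ : 0 < z₀) (hz₁ : 0 < z₁)
    (hz : 2 * δ < z) (hne : z₀ ≠ z₁) (r : ℝ) :
    ¬ ∃ (X : Type) (_ : MetricSpace X) (a b c d e : X),
        dist c d = x₀ + x₁ ∧
        dist e c = z + x₀ ∧
        dist e d = z + x₁ ∧
        dist a e = z₀ ∧
        dist a d = z₀ + z + x₁ ∧
        dist a c = z₀ + z + x₀ - 2 * δ ∧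
        dist b e = z₁ ∧
        dist b d = z₁ + z + x₁ - 2 * δ ∧
        dist b c = z₁ + z + x₀ ∧
        dist a b = r ∧
        IsDeltaHyperbolic δ X := by
  rintro ⟨X, _, a, b, c, d, e, hcd, hec, hed, hae, had, hac, hbe, hbd, hbc, hab, hyp⟩
  have h := hyp a b c d
  have htri : dist a b ≤ dist a e + dist e b := dist_triangle a e b
  have heb : dist e b = z₁ := by rw [dist_comm]; exact hbe
  rw [had, hbc, hab, hcd, hac, hbd] at h
  rw [hab, hae, heb] at htri
  rcases max_cases (r + (x₀ + x₁)) (z₀ + z + x₀ - 2 * δ + (z₁ + z + x₁ - 2 * δ)) with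
    ⟨he, _⟩ | ⟨he, _⟩ <;> rw [he] at h <;> linarith
end

section
/- Let A, B₁, B₂ be δ-hyperbolic metric spaces with A δ-closed in both B₁ and B₂. Then the canonical amalgam D = B₁ ⊗_A B₂ is a metric space which is δ-hyperbolic, and B₁ and B₂ are δ-closed in D. -/
set_option linter.unusedSectionVars false
set_option maxHeartbeats 1000000

namespace CanAmalgam

section Gates

variable {A B : Type} [MetricSpace A] [MetricSpace B]

lemma gate_unique {X : Type*} [MetricSpace X] {S : Set X} {b g g' : X}
    (h : IsGate S b g) (h' : IsGate S b g') : g = g' := by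
  have h1 := h.2 g' h'.1
  have h2 := h'.2 g h.1
  have h3 : dist g g' = 0 := by
    linarith [dist_comm g g', dist_nonneg (x := g) (y := g')]
  exact dist_eq_zero.mp h3

lemma extract {i : A → B} {δ : ℝ} (hi : Isometry i)
    (h : DeltaClosed δ (Set.range i)) :
    ∃ φ : B → A,
      (∀ (x : B) (a : A), dist x (i a) = dist x (i (φ x)) + dist (φ x) a) ∧
      (∀ x x' : B, δ < dist (φ x) (φ x') →
        dist x x' = dist x (i (φ x)) + dist (φ x) (φ x') + dist (i (φ x')) x') := by
  classical
  obtain ⟨g, hg, hcl⟩ := h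
  have hchoice : ∀ x : B, ∃ a : A, i a = x ∨ (x ∉ Set.range i ∧ i a = g x) := by
    intro x
    by_cases hx : x ∈ Set.range i
    · obtain ⟨a, ha⟩ := hx; exact ⟨a, Or.inl ha⟩
    · obtain ⟨a, ha⟩ := (hg x hx).1; exact ⟨a, Or.inr ⟨hx, ha⟩⟩
  choose φ hφ using hchoice
  have key : ∀ (x : B) (a : A), dist x (i a) = dist x (i (φ x)) + dist (φ x) a := by
    intro x a
    rcases hφ x with e | ⟨hx, e⟩
    · rw [e, dist_self, zero_add, ← hi.dist_eq, e]
    · rw [e, ← hi.dist_eq (φ x) a, e]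
      exact (hg x hx).2 (i a) ⟨a, rfl⟩
  have gate_eq : ∀ x, x ∉ Set.range i → i (φ x) = g x := by
    intro x hx
    rcases hφ x with e | ⟨_, e⟩
    · exact absurd ⟨φ x, e⟩ hx
    · exact e
  refine ⟨φ, key, ?_⟩
  intro x x' hlt
  by_cases hx : x ∈ Set.range i
  · have e : i (φ x) = x := by
      rcases hφ x with e | ⟨hx', _⟩
      · exact e
      · exact absurd hx hx'
    have k := key x' (φ x)
    rw [e] at k
    rw [e]
    linarith [dist_comm x x', dist_comm (φ x) (φ x'), dist_comm x' (i (φ x')),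
      dist_self x]
  · by_cases hx' : x' ∈ Set.range i
    · have e : i (φ x') = x' := by
        rcases hφ x' with e | ⟨hx'', _⟩
        · exact e
        · exact absurd hx' hx''
      have k := key x (φ x')
      rw [e] at k
      rw [e]
      linarith [dist_self x']
    · have e := gate_eq x hx
      have e' := gate_eq x' hx'
      have hgg : dist (g x) (g x') = dist (φ x) (φ x') := by
        rw [← e, ← e', hi.dist_eq]
      have hc := hcl x hx x' hx' (by rw [hgg]; exact hlt)
      rw [← hi.dist_eq (φ x) (φ x'), e, e']
      exact hc

lemma sec_of_key {i : A → B} {φ : B → A}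
    (key : ∀ (x : B) (a : A), dist x (i a) = dist x (i (φ x)) + dist (φ x) a) :
    ∀ a : A, φ (i a) = a := by
  intro a
  have h := key (i a) a
  rw [dist_self] at h
  have h1 : dist (φ (i a)) a = 0 :=
    le_antisymm (by linarith [dist_nonneg (x := i a) (y := i (φ (i a)))]) dist_nonneg
  exact dist_eq_zero.mp h1

lemma isGate_phi {i : A → B} {φ : B → A} (hi : Isometry i)
    (key : ∀ (x : B) (a : A), dist x (i a) = dist x (i (φ x)) + dist (φ x) a)
    (x : B) : IsGate (Set.range i) x (i (φ x)) := by
  refine ⟨⟨φ x, rfl⟩, ?_⟩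
  rintro p ⟨a, rfl⟩
  rw [hi.dist_eq]
  exact key x a

end Gates

variable {A B₁ B₂ : Type} [MetricSpace A] [MetricSpace B₁] [MetricSpace B₂]

abbrev Amal (B₁ : Type) {A B₂ : Type} (i₂ : A → B₂) : Type :=
  B₁ ⊕ {y : B₂ // y ∉ Set.range i₂}

variable (i₁ : A → B₁) (i₂ : A → B₂) (φ₂ : B₂ → A)

/-- The distance on the canonical amalgam. -/
def adist : Amal B₁ i₂ → Amal B₁ i₂ → ℝ
  | .inl x, .inl x' => dist x x'
  | .inl x, .inr y => dist x (i₁ (φ₂ y.1)) + dist (i₂ (φ₂ y.1)) y.1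
  | .inr y, .inl x => dist x (i₁ (φ₂ y.1)) + dist (i₂ (φ₂ y.1)) y.1
  | .inr y, .inr y' => dist y.1 y'.1

@[simp] lemma adist_ll (x x' : B₁) :
    adist i₁ i₂ φ₂ (Sum.inl x) (Sum.inl x') = dist x x' := rfl
@[simp] lemma adist_lr (x : B₁) (y : {y : B₂ // y ∉ Set.range i₂}) :
    adist i₁ i₂ φ₂ (Sum.inl x) (Sum.inr y)
      = dist x (i₁ (φ₂ y.1)) + dist (i₂ (φ₂ y.1)) y.1 := rfl
@[simp] lemma adist_rl (x : B₁) (y : {y : B₂ // y ∉ Set.range i₂}) :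
    adist i₁ i₂ φ₂ (Sum.inr y) (Sum.inl x)
      = dist x (i₁ (φ₂ y.1)) + dist (i₂ (φ₂ y.1)) y.1 := rfl
@[simp] lemma adist_rr (y y' : {y : B₂ // y ∉ Set.range i₂}) :
    adist i₁ i₂ φ₂ (Sum.inr y) (Sum.inr y') = dist y.1 y'.1 := rfl

variable {i₁ i₂ φ₂}

section Metric

variable (hi₁ : Isometry i₁)
  (hφ₂ : ∀ (y : B₂) (a : A), dist y (i₂ a) = dist y (i₂ (φ₂ y)) + dist (φ₂ y) a)

lemma adist_self (p : Amal B₁ i₂) : adist i₁ i₂ φ₂ p p = 0 := by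
  rcases p with x | y <;> simp

lemma adist_comm (p q : Amal B₁ i₂) : adist i₁ i₂ φ₂ p q = adist i₁ i₂ φ₂ q p := by
  rcases p with x | y <;> rcases q with x' | y' <;> simp [dist_comm]

include hi₁ hφ₂ in
lemma adist_triangle (p q r : Amal B₁ i₂) :
    adist i₁ i₂ φ₂ p r ≤ adist i₁ i₂ φ₂ p q + adist i₁ i₂ φ₂ q r := by
  rcases p with x | y <;> rcases q with x' | y' <;> rcases r with x'' | y'' <;>
    simp only [adist_ll, adist_lr, adist_rl, adist_rr]
  · exact dist_triangle _ _ _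
  · linarith [dist_triangle x x' (i₁ (φ₂ y''.1))]
  · linarith [dist_triangle x (i₁ (φ₂ y'.1)) x'', dist_comm (i₁ (φ₂ y'.1)) x'',
      dist_nonneg (x := i₂ (φ₂ y'.1)) (y := y'.1)]
  · have f1 := dist_triangle x (i₁ (φ₂ y'.1)) (i₁ (φ₂ y''.1))
    have f2 := hi₁.dist_eq (φ₂ y'.1) (φ₂ y''.1)
    have f3 := hφ₂ y''.1 (φ₂ y'.1)
    have f4 := dist_triangle y''.1 y'.1 (i₂ (φ₂ y'.1))
    have c1 : dist (i₂ (φ₂ y''.1)) y''.1 = dist y''.1 (i₂ (φ₂ y''.1)) := dist_comm _ _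
    have c2 : dist (i₂ (φ₂ y'.1)) y'.1 = dist y'.1 (i₂ (φ₂ y'.1)) := dist_comm _ _
    have c3 : dist (φ₂ y''.1) (φ₂ y'.1) = dist (φ₂ y'.1) (φ₂ y''.1) := dist_comm _ _
    have c4 : dist y''.1 y'.1 = dist y'.1 y''.1 := dist_comm _ _
    linarith
  · linarith [dist_triangle x'' x' (i₁ (φ₂ y.1)), dist_comm x'' x']
  · have t1 := dist_triangle y.1 (i₂ (φ₂ y''.1)) y''.1
    have f3 := hφ₂ y.1 (φ₂ y''.1)
    have f2 := hi₁.dist_eq (φ₂ y.1) (φ₂ y''.1)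
    have t2 := dist_triangle (i₁ (φ₂ y.1)) x' (i₁ (φ₂ y''.1))
    have c1 : dist (i₂ (φ₂ y.1)) y.1 = dist y.1 (i₂ (φ₂ y.1)) := dist_comm _ _
    have c2 : dist (i₁ (φ₂ y.1)) x' = dist x' (i₁ (φ₂ y.1)) := dist_comm _ _
    linarith
  · have f1 := dist_triangle x'' (i₁ (φ₂ y'.1)) (i₁ (φ₂ y.1))
    have f2 := hi₁.dist_eq (φ₂ y'.1) (φ₂ y.1)
    have f3 := hφ₂ y.1 (φ₂ y'.1)
    have f4 := dist_triangle y.1 y'.1 (i₂ (φ₂ y'.1))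
    have c1 : dist (i₂ (φ₂ y.1)) y.1 = dist y.1 (i₂ (φ₂ y.1)) := dist_comm _ _
    have c2 : dist (i₂ (φ₂ y'.1)) y'.1 = dist y'.1 (i₂ (φ₂ y'.1)) := dist_comm _ _
    have c3 : dist (φ₂ y.1) (φ₂ y'.1) = dist (φ₂ y'.1) (φ₂ y.1) := dist_comm _ _
    linarith
  · exact dist_triangle _ _ _

include hi₁ hφ₂ in
lemma adist_eq_zero {p q : Amal B₁ i₂} (h : adist i₁ i₂ φ₂ p q = 0) : p = q := by
  rcases p with x | y <;> rcases q with x' | y' <;>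
    simp only [adist_ll, adist_lr, adist_rl, adist_rr] at h
  · rw [dist_eq_zero] at h; rw [h]
  · exfalso
    have h1 : dist (i₂ (φ₂ y'.1)) y'.1 = 0 :=
      le_antisymm (by linarith [dist_nonneg (x := x) (y := i₁ (φ₂ y'.1))]) dist_nonneg
    rw [dist_eq_zero] at h1
    exact y'.2 ⟨φ₂ y'.1, h1⟩
  · exfalso
    have h1 : dist (i₂ (φ₂ y.1)) y.1 = 0 :=
      le_antisymm (by linarith [dist_nonneg (x := x') (y := i₁ (φ₂ y.1))]) dist_nonneg
    rw [dist_eq_zero] at h1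
    exact y.2 ⟨φ₂ y.1, h1⟩
  · rw [dist_eq_zero] at h; exact congrArg Sum.inr (Subtype.ext h)

/-- The metric space structure on the amalgam. -/
def amalMS (hi₁ : Isometry i₁)
    (hφ₂ : ∀ (y : B₂) (a : A), dist y (i₂ a) = dist y (i₂ (φ₂ y)) + dist (φ₂ y) a) :
    MetricSpace (Amal B₁ i₂) where
  dist := adist i₁ i₂ φ₂
  dist_self := adist_self
  dist_comm := adist_comm
  dist_triangle := adist_triangle hi₁ hφ₂
  eq_of_dist_eq_zero := adist_eq_zero hi₁ hφ₂

end Metric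

variable {φ₁ : B₁ → A} {δ : ℝ}

lemma amal_hyp
    (hB₁ : IsDeltaHyperbolic δ B₁) (hB₂ : IsDeltaHyperbolic δ B₂)
    (hi₁ : Isometry i₁)
    (hφ₁ : ∀ (x : B₁) (a : A), dist x (i₁ a) = dist x (i₁ (φ₁ x)) + dist (φ₁ x) a)
    (hφ₂ : ∀ (y : B₂) (a : A), dist y (i₂ a) = dist y (i₂ (φ₂ y)) + dist (φ₂ y) a)
    (hc₂ : ∀ y y' : B₂, δ < dist (φ₂ y) (φ₂ y') →
      dist y y' = dist y (i₂ (φ₂ y)) + dist (φ₂ y) (φ₂ y') + dist (i₂ (φ₂ y')) y') :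
    ∀ p₁ p₂ p₃ p₄ : Amal B₁ i₂,
      adist i₁ i₂ φ₂ p₁ p₄ + adist i₁ i₂ φ₂ p₂ p₃ ≤
        max (adist i₁ i₂ φ₂ p₁ p₂ + adist i₁ i₂ φ₂ p₃ p₄)
          (adist i₁ i₂ φ₂ p₁ p₃ + adist i₁ i₂ φ₂ p₂ p₄) + 2 * δ := by
  have Hsh : ∀ {c a b : ℝ} (r : ℝ) {a' b' X : ℝ}, c ≤ max a b + 2*δ → a + r ≤ a' →
      b + r ≤ b' → X ≤ c + r → X ≤ max a' b' + 2*δ := by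
    intro c a b r a' b' X h ha hb hX
    rcases le_max_iff.mp (show c - 2*δ ≤ max a b by linarith) with h1 | h1
    · linarith [le_max_left a' b']
    · linarith [le_max_right a' b']
  have HL : ∀ {X E F : ℝ}, X ≤ E + 2*δ → X ≤ max E F + 2*δ := by
    intro X E F h; linarith [le_max_left E F]
  have HR : ∀ {X E F : ℝ}, X ≤ F + 2*δ → X ≤ max E F + 2*δ := by
    intro X E F h; linarith [le_max_right E F]
  have M2 : ∀ (x : B₁) (y : {y : B₂ // y ∉ Set.range i₂}),
      dist x (i₁ (φ₂ y.1)) + dist (i₂ (φ₂ y.1)) y.1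
        = dist x (i₁ (φ₁ x)) + dist (i₂ (φ₁ x)) y.1 := by
    intro x y
    have h1 := hφ₁ x (φ₂ y.1)
    have h2 := hφ₂ y.1 (φ₁ x)
    have c1 : dist (i₂ (φ₂ y.1)) y.1 = dist y.1 (i₂ (φ₂ y.1)) := dist_comm _ _
    have c2 : dist (i₂ (φ₁ x)) y.1 = dist y.1 (i₂ (φ₁ x)) := dist_comm _ _
    have c3 : dist (φ₂ y.1) (φ₁ x) = dist (φ₁ x) (φ₂ y.1) := dist_comm _ _
    linarith
  intro p₁ p₂ p₃ p₄
  rcases p₁ with x₁ | y₁ <;> rcases p₂ with x₂ | y₂ <;> rcases p₃ with x₃ | y₃ <;>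
    rcases p₄ with x₄ | y₄ <;>
    simp only [adist_ll, adist_lr, adist_rl, adist_rr]
  -- LLLL
  · exact hB₁ x₁ x₂ x₃ x₄
  -- LLLR
  · exact Hsh (dist (i₂ (φ₂ y₄.1)) y₄.1) (hB₁ x₁ x₂ x₃ (i₁ (φ₂ y₄.1)))
      (by linarith) (by linarith) (by linarith)
  -- LLRL
  · refine Hsh (dist (i₂ (φ₂ y₃.1)) y₃.1) (hB₁ x₁ x₂ (i₁ (φ₂ y₃.1)) x₄) ?_ ?_ ?_ <;>
      linarith [dist_comm (i₁ (φ₂ y₃.1)) x₄]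
  -- LLRR
  · by_cases hg : δ < dist (φ₂ y₃.1) (φ₂ y₄.1)
    · refine Hsh (dist (i₂ (φ₂ y₃.1)) y₃.1 + dist (i₂ (φ₂ y₄.1)) y₄.1)
        (hB₁ x₁ x₂ (i₁ (φ₂ y₃.1)) (i₁ (φ₂ y₄.1))) ?_ ?_ ?_ <;>
        linarith [hc₂ y₃.1 y₄.1 hg, hi₁.dist_eq (φ₂ y₃.1) (φ₂ y₄.1),
          dist_comm y₃.1 (i₂ (φ₂ y₃.1))]
    · push_neg at hg
      refine HR ?_
      linarith [dist_triangle x₁ (i₁ (φ₂ y₃.1)) (i₁ (φ₂ y₄.1)),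
        dist_triangle x₂ (i₁ (φ₂ y₄.1)) (i₁ (φ₂ y₃.1)),
        hi₁.dist_eq (φ₂ y₃.1) (φ₂ y₄.1), dist_comm (i₁ (φ₂ y₃.1)) (i₁ (φ₂ y₄.1))]
  -- LRLL
  · refine Hsh (dist (i₂ (φ₂ y₂.1)) y₂.1) (hB₁ x₁ (i₁ (φ₂ y₂.1)) x₃ x₄) ?_ ?_ ?_ <;>
      linarith [dist_comm (i₁ (φ₂ y₂.1)) x₃, dist_comm (i₁ (φ₂ y₂.1)) x₄]
  -- LRLR
  · by_cases hg : δ < dist (φ₂ y₂.1) (φ₂ y₄.1)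
    · refine Hsh (dist (i₂ (φ₂ y₂.1)) y₂.1 + dist (i₂ (φ₂ y₄.1)) y₄.1)
        (hB₁ x₁ (i₁ (φ₂ y₂.1)) x₃ (i₁ (φ₂ y₄.1))) ?_ ?_ ?_ <;>
        linarith [hc₂ y₂.1 y₄.1 hg, hi₁.dist_eq (φ₂ y₂.1) (φ₂ y₄.1),
          dist_comm y₂.1 (i₂ (φ₂ y₂.1)), dist_comm (i₁ (φ₂ y₂.1)) x₃]
    · push_neg at hg
      refine HL ?_
      linarith [dist_triangle x₁ (i₁ (φ₂ y₂.1)) (i₁ (φ₂ y₄.1)),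
        dist_triangle x₃ (i₁ (φ₂ y₄.1)) (i₁ (φ₂ y₂.1)),
        hi₁.dist_eq (φ₂ y₂.1) (φ₂ y₄.1), dist_comm (i₁ (φ₂ y₂.1)) (i₁ (φ₂ y₄.1))]
  -- LRRL
  · by_cases hg : δ < dist (φ₂ y₂.1) (φ₂ y₃.1)
    · refine Hsh (dist (i₂ (φ₂ y₂.1)) y₂.1 + dist (i₂ (φ₂ y₃.1)) y₃.1)
        (hB₁ x₁ (i₁ (φ₂ y₂.1)) (i₁ (φ₂ y₃.1)) x₄) ?_ ?_ ?_ <;>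
        linarith [hc₂ y₂.1 y₃.1 hg, hi₁.dist_eq (φ₂ y₂.1) (φ₂ y₃.1),
          dist_comm y₂.1 (i₂ (φ₂ y₂.1)), dist_comm (i₁ (φ₂ y₂.1)) x₄,
          dist_comm (i₁ (φ₂ y₃.1)) x₄]
    · push_neg at hg
      refine HL ?_
      linarith [hφ₂ y₂.1 (φ₂ y₃.1), dist_triangle y₂.1 (i₂ (φ₂ y₃.1)) y₃.1,
        dist_comm y₂.1 (i₂ (φ₂ y₂.1)),
        dist_triangle x₁ (i₁ (φ₂ y₂.1)) x₄,
        dist_triangle (i₁ (φ₂ y₂.1)) (i₁ (φ₂ y₃.1)) x₄,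
        dist_comm (i₁ (φ₂ y₃.1)) x₄, hi₁.dist_eq (φ₂ y₂.1) (φ₂ y₃.1)]
  -- LRRR
  · refine Hsh (dist x₁ (i₁ (φ₁ x₁))) (hB₂ (i₂ (φ₁ x₁)) y₂.1 y₃.1 y₄.1) ?_ ?_ ?_ <;>
      linarith [M2 x₁ y₂, M2 x₁ y₃, M2 x₁ y₄, dist_comm y₂.1 (i₂ (φ₁ x₁)),
        dist_comm y₃.1 (i₂ (φ₁ x₁)), dist_comm y₄.1 (i₂ (φ₁ x₁))]
  -- RLLL
  · refine Hsh (dist (i₂ (φ₂ y₁.1)) y₁.1) (hB₁ (i₁ (φ₂ y₁.1)) x₂ x₃ x₄) ?_ ?_ ?_ <;>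
      linarith [dist_comm (i₁ (φ₂ y₁.1)) x₂, dist_comm (i₁ (φ₂ y₁.1)) x₃,
        dist_comm (i₁ (φ₂ y₁.1)) x₄]
  -- RLLR
  · by_cases hg : δ < dist (φ₂ y₁.1) (φ₂ y₄.1)
    · refine Hsh (dist (i₂ (φ₂ y₁.1)) y₁.1 + dist (i₂ (φ₂ y₄.1)) y₄.1)
        (hB₁ (i₁ (φ₂ y₁.1)) x₂ x₃ (i₁ (φ₂ y₄.1))) ?_ ?_ ?_ <;>
        linarith [hc₂ y₁.1 y₄.1 hg, hi₁.dist_eq (φ₂ y₁.1) (φ₂ y₄.1),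
          dist_comm y₁.1 (i₂ (φ₂ y₁.1)), dist_comm (i₁ (φ₂ y₁.1)) x₂,
          dist_comm (i₁ (φ₂ y₁.1)) x₃]
    · push_neg at hg
      refine HL ?_
      linarith [hφ₂ y₁.1 (φ₂ y₄.1), dist_triangle y₁.1 (i₂ (φ₂ y₄.1)) y₄.1,
        dist_comm y₁.1 (i₂ (φ₂ y₁.1)),
        dist_triangle x₂ (i₁ (φ₂ y₁.1)) x₃,
        dist_triangle (i₁ (φ₂ y₁.1)) (i₁ (φ₂ y₄.1)) x₃,
        dist_comm (i₁ (φ₂ y₄.1)) x₃, hi₁.dist_eq (φ₂ y₁.1) (φ₂ y₄.1)]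
  -- RLRL
  · by_cases hg : δ < dist (φ₂ y₁.1) (φ₂ y₃.1)
    · refine Hsh (dist (i₂ (φ₂ y₁.1)) y₁.1 + dist (i₂ (φ₂ y₃.1)) y₃.1)
        (hB₁ (i₁ (φ₂ y₁.1)) x₂ (i₁ (φ₂ y₃.1)) x₄) ?_ ?_ ?_ <;>
        linarith [hc₂ y₁.1 y₃.1 hg, hi₁.dist_eq (φ₂ y₁.1) (φ₂ y₃.1),
          dist_comm y₁.1 (i₂ (φ₂ y₁.1)), dist_comm (i₁ (φ₂ y₁.1)) x₂,
          dist_comm (i₁ (φ₂ y₁.1)) x₄, dist_comm (i₁ (φ₂ y₃.1)) x₄]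
    · push_neg at hg
      refine HL ?_
      linarith [dist_triangle x₄ (i₁ (φ₂ y₃.1)) (i₁ (φ₂ y₁.1)),
        dist_triangle x₂ (i₁ (φ₂ y₁.1)) (i₁ (φ₂ y₃.1)),
        hi₁.dist_eq (φ₂ y₁.1) (φ₂ y₃.1), dist_comm (i₁ (φ₂ y₁.1)) (i₁ (φ₂ y₃.1))]
  -- RLRR
  · refine Hsh (dist x₂ (i₁ (φ₁ x₂))) (hB₂ y₁.1 (i₂ (φ₁ x₂)) y₃.1 y₄.1) ?_ ?_ ?_ <;>
      linarith [M2 x₂ y₁, M2 x₂ y₃, M2 x₂ y₄, dist_comm y₁.1 (i₂ (φ₁ x₂)),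
        dist_comm y₃.1 (i₂ (φ₁ x₂)), dist_comm y₄.1 (i₂ (φ₁ x₂))]
  -- RRLL
  · by_cases hg : δ < dist (φ₂ y₁.1) (φ₂ y₂.1)
    · refine Hsh (dist (i₂ (φ₂ y₁.1)) y₁.1 + dist (i₂ (φ₂ y₂.1)) y₂.1)
        (hB₁ (i₁ (φ₂ y₁.1)) (i₁ (φ₂ y₂.1)) x₃ x₄) ?_ ?_ ?_ <;>
        linarith [hc₂ y₁.1 y₂.1 hg, hi₁.dist_eq (φ₂ y₁.1) (φ₂ y₂.1),
          dist_comm y₁.1 (i₂ (φ₂ y₁.1)), dist_comm (i₁ (φ₂ y₁.1)) x₃,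
          dist_comm (i₁ (φ₂ y₁.1)) x₄, dist_comm (i₁ (φ₂ y₂.1)) x₃,
          dist_comm (i₁ (φ₂ y₂.1)) x₄]
    · push_neg at hg
      refine HR ?_
      linarith [dist_triangle x₄ (i₁ (φ₂ y₂.1)) (i₁ (φ₂ y₁.1)),
        dist_triangle x₃ (i₁ (φ₂ y₁.1)) (i₁ (φ₂ y₂.1)),
        hi₁.dist_eq (φ₂ y₁.1) (φ₂ y₂.1), dist_comm (i₁ (φ₂ y₁.1)) (i₁ (φ₂ y₂.1))]
  -- RRLR
  · refine Hsh (dist x₃ (i₁ (φ₁ x₃))) (hB₂ y₁.1 y₂.1 (i₂ (φ₁ x₃)) y₄.1) ?_ ?_ ?_ <;>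
      linarith [M2 x₃ y₁, M2 x₃ y₂, M2 x₃ y₄, dist_comm y₁.1 (i₂ (φ₁ x₃)),
        dist_comm y₂.1 (i₂ (φ₁ x₃)), dist_comm y₄.1 (i₂ (φ₁ x₃))]
  -- RRRL
  · refine Hsh (dist x₄ (i₁ (φ₁ x₄))) (hB₂ y₁.1 y₂.1 y₃.1 (i₂ (φ₁ x₄))) ?_ ?_ ?_ <;>
      linarith [M2 x₄ y₁, M2 x₄ y₂, M2 x₄ y₃, dist_comm y₁.1 (i₂ (φ₁ x₄)),
        dist_comm y₂.1 (i₂ (φ₁ x₄)), dist_comm y₃.1 (i₂ (φ₁ x₄))]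
  -- RRRR
  · exact hB₂ y₁.1 y₂.1 y₃.1 y₄.1

end CanAmalgam
open CanAmalgam in
/-- The canonical amalgam of two δ-hyperbolic spaces `B₁`, `B₂` over a common
δ-closed subspace `A` is a δ-hyperbolic metric space `D` in which `B₁` and `B₂`
are δ-closed, with cross distances computed through the gates in `A`. -/
theorem canonical_amalgam (δ : ℝ) (hδ : 0 ≤ δ)
    (A B₁ B₂ : Type) [MetricSpace A] [MetricSpace B₁] [MetricSpace B₂]
    (hB₁ : IsDeltaHyperbolic δ B₁) (hB₂ : IsDeltaHyperbolic δ B₂)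
    (i₁ : A → B₁) (i₂ : A → B₂) (hi₁ : Isometry i₁) (hi₂ : Isometry i₂)
    (hA₁ : DeltaClosed δ (Set.range i₁)) (hA₂ : DeltaClosed δ (Set.range i₂)) :
    ∃ (D : Type) (_ : MetricSpace D) (j₁ : B₁ → D) (j₂ : B₂ → D),
      Isometry j₁ ∧ Isometry j₂ ∧
      (∀ a : A, j₁ (i₁ a) = j₂ (i₂ a)) ∧
      Set.range j₁ ∪ Set.range j₂ = Set.univ ∧
      Set.range j₁ ∩ Set.range j₂ = Set.range (fun a => j₁ (i₁ a)) ∧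
      (∀ (x : B₁) (y : B₂) (gx : B₁) (gy : B₂),
        x ∉ Set.range i₁ → y ∉ Set.range i₂ →
        IsGate (Set.range i₁) x gx → IsGate (Set.range i₂) y gy →
        dist (j₁ x) (j₂ y) = dist x gx + dist (j₁ gx) (j₂ gy) + dist gy y) ∧
      IsDeltaHyperbolic δ D ∧
      DeltaClosed δ (Set.range j₁) ∧ DeltaClosed δ (Set.range j₂) := by
  classical
  obtain ⟨φ₁, hφ₁, hc₁⟩ := extract hi₁ hA₁
  obtain ⟨φ₂, hφ₂, hc₂⟩ := extract hi₂ hA₂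
  have sec₂ : ∀ a : A, φ₂ (i₂ a) = a := sec_of_key hφ₂
  letI M : MetricSpace (Amal B₁ i₂) := amalMS hi₁ hφ₂
  have ddef : ∀ p q : Amal B₁ i₂, dist p q = adist i₁ i₂ φ₂ p q := fun _ _ => rfl
  set j₂ : B₂ → Amal B₁ i₂ :=
    fun y => if h : y ∈ Set.range i₂ then Sum.inl (i₁ (φ₂ y)) else Sum.inr ⟨y, h⟩
    with hj₂
  have hj₂in : ∀ a : A, j₂ (i₂ a) = Sum.inl (i₁ a) := by
    intro a
    simp only [hj₂]
    rw [dif_pos ⟨a, rfl⟩, sec₂ a]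
  have hj₂out : ∀ (y : B₂) (h : y ∉ Set.range i₂), j₂ y = Sum.inr ⟨y, h⟩ := by
    intro y h
    simp only [hj₂]
    rw [dif_neg h]
  refine ⟨Amal B₁ i₂, M, Sum.inl, j₂, ?_, ?_, ?_, ?_, ?_, ?_, ?_, ?_, ?_⟩
  · -- Isometry j₁
    exact Isometry.of_dist_eq fun x x' => rfl
  · -- Isometry j₂
    refine Isometry.of_dist_eq fun y y' => ?_
    by_cases h : y ∈ Set.range i₂ <;> by_cases h' : y' ∈ Set.range i₂
    · obtain ⟨a, rfl⟩ := h
      obtain ⟨a', rfl⟩ := h'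
      rw [hj₂in a, hj₂in a', ddef, adist_ll, hi₁.dist_eq, ← hi₂.dist_eq]
    · obtain ⟨a, rfl⟩ := h
      rw [hj₂in a, hj₂out y' h', ddef, adist_lr, hi₁.dist_eq]
      linarith [hφ₂ y' a, dist_comm y' (i₂ a), dist_comm (i₂ (φ₂ y')) y',
        dist_comm a (φ₂ y')]
    · obtain ⟨a', rfl⟩ := h'
      rw [hj₂out y h, hj₂in a', ddef, adist_rl, hi₁.dist_eq]
      linarith [hφ₂ y a', dist_comm y (i₂ a'), dist_comm (i₂ (φ₂ y)) y,
        dist_comm a' (φ₂ y)]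
    · rw [hj₂out y h, hj₂out y' h', ddef, adist_rr]
  · -- compatibility
    exact fun a => (hj₂in a).symm
  · -- union
    ext p
    simp only [Set.mem_union, Set.mem_univ, iff_true]
    rcases p with x | y
    · exact Or.inl ⟨x, rfl⟩
    · exact Or.inr ⟨y.1, by rw [hj₂out y.1 y.2]⟩
  · -- intersection
    ext p
    constructor
    · rintro ⟨⟨x, rfl⟩, ⟨w, hw⟩⟩
      by_cases hmem : w ∈ Set.range i₂
      · obtain ⟨a, rfl⟩ := hmem
        rw [hj₂in a] at hw
        exact ⟨a, hw⟩
      · rw [hj₂out w hmem] at hw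
        exact absurd hw (by simp)
    · rintro ⟨a, ha⟩
      exact ⟨⟨i₁ a, ha⟩, ⟨i₂ a, by rw [hj₂in a]; exact ha⟩⟩
  · -- cross distance through gates
    intro x y gx gy hx hy hgx hgy
    have egx : gx = i₁ (φ₁ x) := gate_unique hgx (isGate_phi hi₁ hφ₁ x)
    have egy : gy = i₂ (φ₂ y) := gate_unique hgy (isGate_phi hi₂ hφ₂ y)
    subst egx
    subst egy
    rw [hj₂out y hy, hj₂in (φ₂ y), ddef, ddef, adist_lr, adist_ll]
    have h1 := hφ₁ x (φ₂ y)
    have h2 := hi₁.dist_eq (φ₁ x) (φ₂ y)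
    linarith
  · -- hyperbolicity
    intro p₁ p₂ p₃ p₄
    exact amal_hyp hB₁ hB₂ hi₁ hφ₁ hφ₂ hc₂ p₁ p₂ p₃ p₄
  · -- B₁ is δ-closed
    refine ⟨fun p => Sum.casesOn p Sum.inl (fun y => Sum.inl (i₁ (φ₂ y.1))), ?_, ?_⟩
    · intro b hb
      rcases b with x | y
      · exact absurd ⟨x, rfl⟩ hb
      refine ⟨⟨i₁ (φ₂ y.1), rfl⟩, ?_⟩
      rintro q ⟨x, rfl⟩
      show adist i₁ i₂ φ₂ (Sum.inr y) (Sum.inl x)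
        = adist i₁ i₂ φ₂ (Sum.inr y) (Sum.inl (i₁ (φ₂ y.1)))
          + adist i₁ i₂ φ₂ (Sum.inl (i₁ (φ₂ y.1))) (Sum.inl x)
      simp only [adist_rl, adist_ll, dist_self]
      linarith [dist_comm x (i₁ (φ₂ y.1))]
    · intro b hb b' hb' hlt
      rcases b with x | y
      · exact absurd ⟨x, rfl⟩ hb
      rcases b' with x' | y'
      · exact absurd ⟨x', rfl⟩ hb'
      have hlt' : δ < dist (φ₂ y.1) (φ₂ y'.1) := by
        rw [← hi₁.dist_eq (φ₂ y.1) (φ₂ y'.1)]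
        exact hlt
      have hyy := hc₂ y.1 y'.1 hlt'
      show adist i₁ i₂ φ₂ (Sum.inr y) (Sum.inr y')
        = adist i₁ i₂ φ₂ (Sum.inr y) (Sum.inl (i₁ (φ₂ y.1)))
          + adist i₁ i₂ φ₂ (Sum.inl (i₁ (φ₂ y.1))) (Sum.inl (i₁ (φ₂ y'.1)))
          + adist i₁ i₂ φ₂ (Sum.inl (i₁ (φ₂ y'.1))) (Sum.inr y')
      simp only [adist_rr, adist_rl, adist_lr, adist_ll, dist_self]
      linarith [hi₁.dist_eq (φ₂ y.1) (φ₂ y'.1), dist_comm y.1 (i₂ (φ₂ y.1))]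
  · -- B₂ is δ-closed
    refine ⟨fun p => Sum.casesOn p (fun x => Sum.inl (i₁ (φ₁ x))) Sum.inr, ?_, ?_⟩
    · intro b hb
      rcases b with x | y
      swap
      · exact absurd ⟨y.1, hj₂out y.1 y.2⟩ hb
      refine ⟨⟨i₂ (φ₁ x), hj₂in (φ₁ x)⟩, ?_⟩
      rintro q ⟨w, rfl⟩
      by_cases hw : w ∈ Set.range i₂
      · obtain ⟨a, rfl⟩ := hw
        rw [hj₂in a]
        show adist i₁ i₂ φ₂ (Sum.inl x) (Sum.inl (i₁ a))
          = adist i₁ i₂ φ₂ (Sum.inl x) (Sum.inl (i₁ (φ₁ x)))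
            + adist i₁ i₂ φ₂ (Sum.inl (i₁ (φ₁ x))) (Sum.inl (i₁ a))
        simp only [adist_ll]
        rw [hφ₁ x a, hi₁.dist_eq]
      · rw [hj₂out w hw]
        show adist i₁ i₂ φ₂ (Sum.inl x) (Sum.inr ⟨w, hw⟩)
          = adist i₁ i₂ φ₂ (Sum.inl x) (Sum.inl (i₁ (φ₁ x)))
            + adist i₁ i₂ φ₂ (Sum.inl (i₁ (φ₁ x))) (Sum.inr ⟨w, hw⟩)
        simp only [adist_lr, adist_ll]
        linarith [hφ₁ x (φ₂ w), hi₁.dist_eq (φ₁ x) (φ₂ w)]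
    · intro b hb b' hb' hlt
      rcases b with x | y
      swap
      · exact absurd ⟨y.1, hj₂out y.1 y.2⟩ hb
      rcases b' with x' | y'
      swap
      · exact absurd ⟨y'.1, hj₂out y'.1 y'.2⟩ hb'
      have hlt' : δ < dist (φ₁ x) (φ₁ x') := by
        rw [← hi₁.dist_eq (φ₁ x) (φ₁ x')]
        exact hlt
      have hxx := hc₁ x x' hlt'
      show adist i₁ i₂ φ₂ (Sum.inl x) (Sum.inl x')
        = adist i₁ i₂ φ₂ (Sum.inl x) (Sum.inl (i₁ (φ₁ x)))
          + adist i₁ i₂ φ₂ (Sum.inl (i₁ (φ₁ x))) (Sum.inl (i₁ (φ₁ x')))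
          + adist i₁ i₂ φ₂ (Sum.inl (i₁ (φ₁ x'))) (Sum.inl x')
      simp only [adist_ll]
      rw [hxx, hi₁.dist_eq]
end

section
/- Let A and B be δ-closed, disjoint subsets of a metric space X, and set G_A(B) = {g_A(b) : b ∈ B} and G_B(A) = {g_B(a) : a ∈ A}. Then diam(G_A(B)) ≤ δ and diam(G_B(A)) ≤ δ. -/
/-- The gate in `A` of the gate in `B` of the gate in `A` of `b ∈ B` is the
gate of `b` itself. -/
lemma gate_gate_gate {X : Type*} [MetricSpace X] {δ : ℝ}
    {A B : Set X} {gA gB : X → X}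
    (hA : DeltaClosedWith δ A gA) (hB : DeltaClosedWith δ B gB)
    (hdisj : Disjoint A B) {b : X} (hb : b ∈ B) :
    gA (gB (gA b)) = gA b := by
  have hbA : b ∉ A := fun h => hdisj.ne_of_mem h hb rfl
  obtain ⟨hxA, hxg⟩ := hA.1 b hbA
  set x := gA b with hx
  have hxB : x ∉ B := fun h => hdisj.ne_of_mem hxA h rfl
  obtain ⟨hyB, hyg⟩ := hB.1 x hxB
  set y := gB x with hy
  have hyA : y ∉ A := fun h => hdisj.ne_of_mem h hyB rfl
  obtain ⟨hzA, hzg⟩ := hA.1 y hyA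
  set z := gA y with hz
  have h1 : dist x b = dist x y + dist y b := hyg b hb
  have h2 : dist y x = dist y z + dist z x := hzg x hxA
  have h3 : dist b z = dist b x + dist x z := hxg z hzA
  have h4 : dist b z ≤ dist b y + dist y z := dist_triangle b y z
  have h5 : dist x z = 0 := by
    have c1 := dist_comm x b
    have c2 := dist_comm y b
    have c3 := dist_comm y x
    have c4 := dist_comm z x
    have := dist_nonneg (x := x) (y := z)
    linarith
  exact (eq_of_dist_eq_zero h5).symm

lemma gate_dist_le {X : Type*} [MetricSpace X] {δ : ℝ}
    {A B : Set X} {gA gB : X → X}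
    (hA : DeltaClosedWith δ A gA) (hB : DeltaClosedWith δ B gB)
    (hdisj : Disjoint A B) {b b' : X} (hb : b ∈ B) (hb' : b' ∈ B) :
    dist (gA b) (gA b') ≤ δ := by
  by_contra hlt
  push_neg at hlt
  have hbA : b ∉ A := fun h => hdisj.ne_of_mem h hb rfl
  have hb'A : b' ∉ A := fun h => hdisj.ne_of_mem h hb' rfl
  set x := gA b with hxdef
  set x' := gA b' with hx'def
  have hxA : x ∈ A := (hA.1 b hbA).1
  have hx'A : x' ∈ A := (hA.1 b' hb'A).1
  have hxB : x ∉ B := fun h => hdisj.ne_of_mem hxA h rfl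
  have hx'B : x' ∉ B := fun h => hdisj.ne_of_mem hx'A h rfl
  set y := gB x with hydef
  set y' := gB x' with hy'def
  have hyB : y ∈ B := (hB.1 x hxB).1
  have hy'B : y' ∈ B := (hB.1 x' hx'B).1
  have hyA : y ∉ A := fun h => hdisj.ne_of_mem h hyB rfl
  have hy'A : y' ∉ A := fun h => hdisj.ne_of_mem h hy'B rfl
  have hgy : gA y = x := gate_gate_gate hA hB hdisj hb
  have hgy' : gA y' = x' := gate_gate_gate hA hB hdisj hb'
  have key1 : dist y y' = dist y x + dist x x' + dist x' y' := by
    have := hA.2 y hyA y' hy'A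
    rw [hgy, hgy'] at this
    exact this hlt
  have hyy' : δ < dist y y' := by
    have := dist_nonneg (x := y) (y := x)
    have := dist_nonneg (x := x') (y := y')
    linarith
  have key2 : dist x x' = dist x y + dist y y' + dist y' x' :=
    hB.2 x hxB x' hx'B hyy'
  have hxy0 : dist x y = 0 := by
    have := dist_nonneg (x := x) (y := y)
    have := dist_nonneg (x := y') (y := x')
    rw [dist_comm y x] at key1
    rw [dist_comm x' y'] at key1
    linarith
  exact hxB (eq_of_dist_eq_zero hxy0 ▸ hyB)

lemma gateSet_diam_le_aux {X : Type*} [MetricSpace X] {δ : ℝ} (hδ : 0 ≤ δ)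
    {A B : Set X} {gA gB : X → X}
    (hA : DeltaClosedWith δ A gA) (hB : DeltaClosedWith δ B gB)
    (hdisj : Disjoint A B) :
    EMetric.diam (gA '' B) ≤ ENNReal.ofReal δ := by
  apply EMetric.diam_le
  rintro _ ⟨b, hb, rfl⟩ _ ⟨b', hb', rfl⟩
  rw [edist_dist]
  exact ENNReal.ofReal_le_ofReal (gate_dist_le hA hB hdisj hb hb')

/-- For disjoint δ-closed subsets `A`, `B` of a metric space, the gate sets
`G_A(B)` and `G_B(A)` have diameter at most δ. -/
theorem gateSet_diam_le {X : Type*} [MetricSpace X] (δ : ℝ) (hδ : 0 ≤ δ)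
    (A B : Set X) (gA gB : X → X)
    (hA : DeltaClosedWith δ A gA) (hB : DeltaClosedWith δ B gB)
    (hdisj : Disjoint A B) :
    EMetric.diam (gA '' B) ≤ ENNReal.ofReal δ ∧
    EMetric.diam (gB '' A) ≤ ENNReal.ofReal δ := by
  exact ⟨gateSet_diam_le_aux hδ hA hB hdisj,
    gateSet_diam_le_aux hδ hB hA hdisj.symm⟩
end

section
/- Let A and B be δ-closed, disjoint subsets of a metric space X. Then for all a ∈ G_A(B) and b ∈ G_B(A) we have d(a, g_B(a)) = d(b, g_A(b)) = d(A,B), and the gate map a ↦ g_B(a) is an isometry from G_A(B) onto G_B(A). -/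
/-- The distance between two subsets of a metric space. -/
noncomputable def setDist {X : Type*} [MetricSpace X] (A B : Set X) : ℝ :=
  sInf {r : ℝ | ∃ a ∈ A, ∃ b ∈ B, r = dist a b}


/-- Auxiliary: for `b0 ∈ B`, the gate maps retract: `gA (gB (gA b0)) = gA b0`. -/
lemma gate_retract {X : Type*} [MetricSpace X] {A B : Set X} {gA gB : X → X}
    (hgA : GateMap A gA) (hgB : GateMap B gB) (hdisj : Disjoint A B)
    {b0 : X} (hb0 : b0 ∈ B) : gA (gB (gA b0)) = gA b0 := by
  have hb0nA : b0 ∉ A := fun h => Set.disjoint_left.mp hdisj h hb0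
  set a := gA b0 with ha_def
  have haA : a ∈ A := (hgA b0 hb0nA).1
  have hanB : a ∉ B := fun h => Set.disjoint_left.mp hdisj haA h
  set b := gB a with hb_def
  have hbB : b ∈ B := (hgB a hanB).1
  have hbnA : b ∉ A := fun h => Set.disjoint_left.mp hdisj h hbB
  set a' := gA b with ha'_def
  have ha'A : a' ∈ A := (hgA b hbnA).1
  have eq1 : dist a b0 = dist a b + dist b b0 := (hgB a hanB).2 b0 hb0
  have eq2 : dist b0 a' = dist b0 a + dist a a' := (hgA b0 hb0nA).2 a' ha'A
  have eq3 : dist b a = dist b a' + dist a' a := (hgA b hbnA).2 a haA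
  have tri : dist b0 a' ≤ dist b0 b + dist b a' := dist_triangle b0 b a'
  have h0 : dist a a' ≤ 0 := by
    have c1 := dist_comm a b0
    have c2 := dist_comm b b0
    have c3 := dist_comm a b
    have c4 := dist_comm a a'
    linarith
  exact (dist_eq_zero.mp (le_antisymm h0 dist_nonneg)).symm

/-- Auxiliary: constancy of gate distance and isometry of the gate map. -/
lemma gate_key {X : Type*} [MetricSpace X] {A B : Set X} {gA gB : X → X}
    (hgA : GateMap A gA) (hgB : GateMap B gB) (hdisj : Disjoint A B)
    {a1 a2 : X} (h1 : a1 ∈ A) (h2 : a2 ∈ A)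
    (r1 : gA (gB a1) = a1) (r2 : gA (gB a2) = a2) :
    dist a1 (gB a1) = dist a2 (gB a2) ∧ dist (gB a1) (gB a2) = dist a1 a2 := by
  have hn1 : a1 ∉ B := fun h => Set.disjoint_left.mp hdisj h1 h
  have hn2 : a2 ∉ B := fun h => Set.disjoint_left.mp hdisj h2 h
  set b1 := gB a1 with hb1
  set b2 := gB a2 with hb2
  have hb1B : b1 ∈ B := (hgB a1 hn1).1
  have hb2B : b2 ∈ B := (hgB a2 hn2).1
  have hb1nA : b1 ∉ A := fun h => Set.disjoint_left.mp hdisj h hb1B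
  have hb2nA : b2 ∉ A := fun h => Set.disjoint_left.mp hdisj h hb2B
  have E1 : dist a1 b2 = dist a1 b1 + dist b1 b2 := (hgB a1 hn1).2 b2 hb2B
  have E2 : dist b2 a1 = dist b2 (gA b2) + dist (gA b2) a1 := (hgA b2 hb2nA).2 a1 h1
  rw [r2] at E2
  have E3 : dist a2 b1 = dist a2 b2 + dist b2 b1 := (hgB a2 hn2).2 b1 hb1B
  have E4 : dist b1 a2 = dist b1 (gA b1) + dist (gA b1) a2 := (hgA b1 hb1nA).2 a2 h2
  rw [r1] at E4
  have c1 := dist_comm a1 b2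
  have c2 := dist_comm a2 b1
  have c3 := dist_comm a1 a2
  have c4 := dist_comm b1 b2
  have c5 := dist_comm a1 b1
  have c6 := dist_comm a2 b2
  constructor <;> linarith

/-- For disjoint δ-closed subsets `A`, `B`: all points of the gate sets realize the
distance `d(A,B)`, and the gate map is an isometry from `G_A(B)` onto `G_B(A)`. -/
theorem gateSet_isometry {X : Type*} [MetricSpace X] (δ : ℝ) (hδ : 0 ≤ δ)
    (A B : Set X) (gA gB : X → X)
    (hA : DeltaClosedWith δ A gA) (hB : DeltaClosedWith δ B gB)
    (hdisj : Disjoint A B) :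
    (∀ a ∈ gA '' B, dist a (gB a) = setDist A B) ∧
    (∀ b ∈ gB '' A, dist b (gA b) = setDist A B) ∧
    Set.BijOn gB (gA '' B) (gB '' A) ∧
    (∀ a ∈ gA '' B, ∀ a' ∈ gA '' B, dist (gB a) (gB a') = dist a a') := by
  obtain ⟨hgA, -⟩ := hA
  obtain ⟨hgB, -⟩ := hB
  -- basic membership facts for elements of gA '' B
  have hmem : ∀ a ∈ gA '' B, a ∈ A ∧ a ∉ B ∧ gA (gB a) = a := by
    rintro a ⟨b0, hb0, rfl⟩
    have hb0nA : b0 ∉ A := fun h => Set.disjoint_left.mp hdisj h hb0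
    have haA : gA b0 ∈ A := (hgA b0 hb0nA).1
    exact ⟨haA, fun h => Set.disjoint_left.mp hdisj haA h,
      gate_retract hgA hgB hdisj hb0⟩
  have hmemB : ∀ b ∈ gB '' A, b ∈ B ∧ b ∉ A ∧ gB (gA b) = b := by
    rintro b ⟨a0, ha0, rfl⟩
    have ha0nB : a0 ∉ B := fun h => Set.disjoint_left.mp hdisj ha0 h
    have hbB : gB a0 ∈ B := (hgB a0 ha0nB).1
    exact ⟨hbB, fun h => Set.disjoint_left.mp hdisj h hbB,
      gate_retract hgB hgA hdisj.symm ha0⟩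
  have key : ∀ a ∈ gA '' B, ∀ a' ∈ gA '' B,
      dist a (gB a) = dist a' (gB a') ∧ dist (gB a) (gB a') = dist a a' := by
    intro a ha a' ha'
    obtain ⟨h1, -, r1⟩ := hmem a ha
    obtain ⟨h2, -, r2⟩ := hmem a' ha'
    exact gate_key hgA hgB hdisj h1 h2 r1 r2
  -- part 1 : distance realization for gA '' B
  have part1 : ∀ a ∈ gA '' B, dist a (gB a) = setDist A B := by
    intro a ha
    obtain ⟨haA, hanB, -⟩ := hmem a ha
    have hbB : gB a ∈ B := (hgB a hanB).1
    have hset : dist a (gB a) ∈ {r : ℝ | ∃ x ∈ A, ∃ y ∈ B, r = dist x y} :=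
      ⟨a, haA, gB a, hbB, rfl⟩
    refine le_antisymm ?_ ?_
    · -- dist a (gB a) ≤ sInf
      apply le_csInf ⟨_, hset⟩
      rintro r ⟨x, hx, y, hy, rfl⟩
      have hynA : y ∉ A := fun h => Set.disjoint_left.mp hdisj h hy
      have hgyA : gA y ∈ gA '' B := ⟨y, hy, rfl⟩
      obtain ⟨hgyAA, hgynB, -⟩ := hmem _ hgyA
      have e1 : dist y x = dist y (gA y) + dist (gA y) x := (hgA y hynA).2 x hx
      have e2 : dist (gA y) y = dist (gA y) (gB (gA y)) + dist (gB (gA y)) y :=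
        (hgB (gA y) hgynB).2 y hy
      have e3 : dist a (gB a) = dist (gA y) (gB (gA y)) := (key a ha _ hgyA).1
      have c1 := dist_comm y (gA y)
      have c2 := dist_comm x y
      have p1 : (0:ℝ) ≤ dist (gA y) x := dist_nonneg
      have p2 : (0:ℝ) ≤ dist (gB (gA y)) y := dist_nonneg
      linarith
    · exact csInf_le ⟨0, by rintro r ⟨x, -, y, -, rfl⟩; exact dist_nonneg⟩ hset
  refine ⟨part1, ?_, ?_, fun a ha a' ha' => (key a ha a' ha').2⟩
  · -- part 2
    intro b hb
    obtain ⟨hbB, hbnA, rb⟩ := hmemB b hb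
    have hgbA : gA b ∈ gA '' B := ⟨b, hbB, rfl⟩
    have := part1 _ hgbA
    rw [rb] at this
    rw [← this, dist_comm]
  · -- BijOn
    refine ⟨?_, ?_, ?_⟩
    · rintro a ha
      obtain ⟨haA, -, -⟩ := hmem a ha
      exact ⟨a, haA, rfl⟩
    · intro a ha a' ha' heq
      have h := (key a ha a' ha').2
      rw [heq, dist_self] at h
      exact (dist_eq_zero.mp h.symm)
    · rintro b hb
      obtain ⟨hbB, hbnA, rb⟩ := hmemB b hb
      exact ⟨gA b, ⟨b, hbB, rfl⟩, rb⟩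
end
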